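/- arXiv:2312.07578 — 6 statements merged into one kernel-verified Lean document; each statement's English description precedes it below -/
import Mathlib

section
/- Let n ∈ ℝ² be a unit vector, a ∈ ℝ², and let G⁺, G⁻ be 2×2 real matrices with G⁺ − G⁻ = a nᵀ. Let μ⁺, μ⁻, λ⁺, λ⁻, P⁺, P⁻ be real numbers, set D^± = (G^± + (G^±)ᵀ)/2 and Π^± = 2 μ^± D^± + (λ^± tr G^± − P^±) I₂. If (Π⁺ − Π⁻) n = 0, then ⟨μ⟩ (a + (a·n) n) + 2 ⟦μ⟧ ⟨D⟩ n + ⟦λ tr G − P⟧ n = 0. -/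
/-!
The jump of a product obeys the discrete product rule `⟦μ D⟧ = ⟨μ⟩ ⟦D⟧ + ⟦μ⟧ ⟨D⟩`, so
`(Π⁺ − Π⁻) n = 2 ⟨μ⟩ ⟦D⟧ n + 2 ⟦μ⟧ ⟨D⟩ n + ⟦λ tr G − P⟧ n`. Since `⟦D⟧` is the symmetric part of
`a nᵀ` and `n` is a unit vector, `2 ⟦D⟧ n = a + (a·n) n`, and the left-hand side of the
identity is exactly `(Π⁺ − Π⁻) n = 0`.
-/

open Matrix

theorem smul_sub_smul_eq_avg_smul_sub_add_sub_smul_avg {K M : Type*} [Field K] [NeZero (2 : K)]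
    [AddCommGroup M] [Module K M] (x₁ x₂ : K) (y₁ y₂ : M) :
    x₁ • y₁ - x₂ • y₂ = ((x₁ + x₂) / 2) • (y₁ - y₂) + (x₁ - x₂) • ((2⁻¹ : K) • (y₁ + y₂)) := by
  match_scalars <;> field_simp <;> ring

theorem vecMulVec_add_transpose_mulVec {ι R : Type*} [Fintype ι] [CommRing R] (a n : ι → R) :
    (vecMulVec a n + (vecMulVec a n)ᵀ) *ᵥ n = (n ⬝ᵥ n) • a + (a ⬝ᵥ n) • n := by
  rw [transpose_vecMulVec, add_mulVec, vecMulVec_mulVec, vecMulVec_mulVec, op_smul_eq_smul,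
    op_smul_eq_smul]

/-- Balance of stresses across the interface: if the jump of the velocity gradient is
`a nᵀ` and the jump of the stress tensor in the normal direction vanishes, then
`⟨μ⟩ (a + (a·n) n) + 2 ⟦μ⟧ ⟨D⟩ n + ⟦λ tr G − P⟧ n = 0`. -/
theorem stress_balance_identity
    (n a : Fin 2 → ℝ) (hn : n ⬝ᵥ n = 1)
    (Gp Gm : Matrix (Fin 2) (Fin 2) ℝ)
    (hjump : Gp - Gm = vecMulVec a n)
    (μp μm lamp lamm Pp Pm : ℝ)
    (Dp Dm Pip Pim : Matrix (Fin 2) (Fin 2) ℝ)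
    (hDp : Dp = (2⁻¹ : ℝ) • (Gp + Gpᵀ))
    (hDm : Dm = (2⁻¹ : ℝ) • (Gm + Gmᵀ))
    (hPip : Pip = (2 * μp) • Dp + (lamp * Gp.trace - Pp) • (1 : Matrix (Fin 2) (Fin 2) ℝ))
    (hPim : Pim = (2 * μm) • Dm + (lamm * Gm.trace - Pm) • (1 : Matrix (Fin 2) (Fin 2) ℝ))
    (hbal : (Pip - Pim).mulVec n = 0) :
    ((μp + μm) / 2) • (a + (a ⬝ᵥ n) • n)
      + (2 * (μp - μm)) • (((2⁻¹ : ℝ) • (Dp + Dm)).mulVec n)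
      + ((lamp * Gp.trace - Pp) - (lamm * Gm.trace - Pm)) • n = 0 := by
  have hDjump : (Dp - Dm) *ᵥ n = (2⁻¹ : ℝ) • (a + (a ⬝ᵥ n) • n) := by
    rw [hDp, hDm, ← smul_sub, add_sub_add_comm, ← transpose_sub, hjump, smul_mulVec,
      vecMulVec_add_transpose_mulVec, hn, one_smul]
  rw [← hbal, hPip, hPim, add_sub_add_comm, ← sub_smul,
    smul_sub_smul_eq_avg_smul_sub_add_sub_smul_avg]
  simp only [add_mulVec, smul_mulVec, one_mulVec, hDjump]
  module
end

section
/- Let n ∈ ℝ² be a unit vector, a ∈ ℝ², and let G⁺, G⁻ be 2×2 real matrices with G⁺ − G⁻ = a nᵀ. Let μ⁺, μ⁻, λ⁺, λ⁻, P⁺, P⁻ be real numbers, set D^± = (G^± + (G^±)ᵀ)/2 and Π^± = 2 μ^± D^± + (λ^± tr G^± − P^±) I₂. If (Π⁺ − Π⁻) n = 0, then the jump of the effective flux satisfies ⟦(2μ + λ) tr G − P⟧ = 2 ⟦μ⟧ ( ⟨tr G⟩ − (⟨D⟩ n) · n ). -/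
/-!
Write `Φ = (2μ + λ) tr G − P` for the effective flux, so that `Π = 2μ (D − tr G · I₂) + Φ I₂`.
For a unit normal `n`, the normal component of the stress is therefore
`(Π n) · n = Φ − 2μ (tr G − (D n) · n)`, and the balance `(Π⁺ − Π⁻) n = 0` gives
`⟦Φ⟧ = ⟦2μ q⟧` with `q = tr G − (G n) · n`. The quantity `q` does not jump: the jump of `G` is
the rank-one matrix `a nᵀ`, for which `tr (a nᵀ) = a · n = ((a nᵀ) n) · n`. Hence
`⟦2μ q⟧ = 2 ⟦μ⟧ ⟨q⟩`, which is the claim.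
-/

open Matrix

section

variable {m K : Type*} [Fintype m]

theorem symm_mulVec_dotProduct_self [Field K] [NeZero (2 : K)] (G : Matrix m m K) (v : m → K) :
    ((2⁻¹ : K) • (G + Gᵀ)) *ᵥ v ⬝ᵥ v = G *ᵥ v ⬝ᵥ v := by
  have hT : Gᵀ *ᵥ v ⬝ᵥ v = G *ᵥ v ⬝ᵥ v := by
    rw [mulVec_transpose, ← dotProduct_mulVec, dotProduct_comm]
  rw [smul_mulVec, add_mulVec, smul_dotProduct, add_dotProduct, hT, smul_eq_mul, ← two_mul,
    inv_mul_cancel_left₀ two_ne_zero]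

variable [CommRing K]

theorem vecMulVec_mulVec_dotProduct_self (a v : m → K) :
    vecMulVec a v *ᵥ v ⬝ᵥ v = (a ⬝ᵥ v) * (v ⬝ᵥ v) := by
  rw [vecMulVec_mulVec, op_smul_eq_smul, smul_dotProduct, smul_eq_mul, mul_comm]

theorem trace_sub_mulVec_dotProduct_eq_of_sub_eq_vecMulVec {A B : Matrix m m K} {a n : m → K}
    (hn : n ⬝ᵥ n = 1) (hAB : A - B = vecMulVec a n) :
    A.trace - A *ᵥ n ⬝ᵥ n = B.trace - B *ᵥ n ⬝ᵥ n := by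
  have hjump : (A - B).trace - (A - B) *ᵥ n ⬝ᵥ n = 0 := by
    rw [hAB, trace_vecMulVec, vecMulVec_mulVec_dotProduct_self, hn, mul_one, sub_self]
  rw [trace_sub, sub_mulVec, sub_dotProduct] at hjump
  linear_combination hjump

theorem smul_add_smul_one_mulVec_dotProduct_self [DecidableEq m] {n : m → K} (hn : n ⬝ᵥ n = 1)
    (c p : K) (D : Matrix m m K) :
    (c • D + p • (1 : Matrix m m K)) *ᵥ n ⬝ᵥ n = c * (D *ᵥ n ⬝ᵥ n) + p := by
  rw [add_mulVec, smul_mulVec, smul_mulVec, one_mulVec, add_dotProduct, smul_dotProduct,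
    smul_dotProduct, hn, smul_eq_mul, smul_eq_mul, mul_one]

end

/-- Jump of the effective viscous flux across the interface:
`⟦(2μ + λ) tr G − P⟧ = 2 ⟦μ⟧ ( ⟨tr G⟩ − (⟨D⟩ n) · n )`. -/
theorem effective_flux_jump
    (n a : Fin 2 → ℝ) (hn : n ⬝ᵥ n = 1)
    (Gp Gm : Matrix (Fin 2) (Fin 2) ℝ)
    (hjump : Gp - Gm = vecMulVec a n)
    (μp μm lamp lamm Pp Pm : ℝ)
    (Dp Dm Pip Pim : Matrix (Fin 2) (Fin 2) ℝ)
    (hDp : Dp = (2⁻¹ : ℝ) • (Gp + Gpᵀ))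
    (hDm : Dm = (2⁻¹ : ℝ) • (Gm + Gmᵀ))
    (hPip : Pip = (2 * μp) • Dp + (lamp * Gp.trace - Pp) • (1 : Matrix (Fin 2) (Fin 2) ℝ))
    (hPim : Pim = (2 * μm) • Dm + (lamm * Gm.trace - Pm) • (1 : Matrix (Fin 2) (Fin 2) ℝ))
    (hbal : (Pip - Pim).mulVec n = 0) :
    ((2 * μp + lamp) * Gp.trace - Pp) - ((2 * μm + lamm) * Gm.trace - Pm)
      = 2 * (μp - μm) *
        ((Gp.trace + Gm.trace) / 2 - (((2⁻¹ : ℝ) • (Dp + Dm)).mulVec n) ⬝ᵥ n) := by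
  have hnormal : Pip *ᵥ n ⬝ᵥ n = Pim *ᵥ n ⬝ᵥ n := by
    rw [← sub_eq_zero, ← sub_dotProduct, ← sub_mulVec, hbal, zero_dotProduct]
  have hDpn : Dp *ᵥ n ⬝ᵥ n = Gp *ᵥ n ⬝ᵥ n := hDp ▸ symm_mulVec_dotProduct_self Gp n
  have hDmn : Dm *ᵥ n ⬝ᵥ n = Gm *ᵥ n ⬝ᵥ n := hDm ▸ symm_mulVec_dotProduct_self Gm n
  have hq := trace_sub_mulVec_dotProduct_eq_of_sub_eq_vecMulVec hn hjump
  rw [smul_mulVec, add_mulVec, smul_dotProduct, add_dotProduct, smul_eq_mul, hDpn, hDmn]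
  rw [hPip, hPim, smul_add_smul_one_mulVec_dotProduct_self hn,
    smul_add_smul_one_mulVec_dotProduct_self hn, hDpn, hDmn] at hnormal
  linear_combination hnormal + (μp + μm) * hq
end

section
/- Let n ∈ ℝ² be a unit vector, τ = (−n₂, n₁), a ∈ ℝ², and let G⁺, G⁻ be 2×2 real matrices with G⁺ − G⁻ = a nᵀ. Let μ⁺, μ⁻, λ⁺, λ⁻, P⁺, P⁻ be real numbers, set D^± = (G^± + (G^±)ᵀ)/2 and Π^± = 2 μ^± D^± + (λ^± tr G^± − P^±) I₂, and write rot G := G₂₁ − G₁₂. If (Π⁺ − Π⁻) n = 0, then ⟦μ rot G⟧ = ⟦μ⟧ ( ⟨rot G⟩ − 2 (⟨D⟩ n) · τ ). -/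
/-!
Only the tangential component of the stress balance carries information: since `τ ⊥ n`, the
isotropic parts `(λ tr G − P) I₂` drop out and it reads `⟦μ (D n) · τ⟧ = 0`. The kinematic
compatibility `⟦G⟧ = a nᵀ` gives, for `|n| = 1`, `⟦rot G⟧ = a · τ = 2 (⟦D⟧ n) · τ`. Expanding
both jumps with `⟦xy⟧ = ⟦x⟧⟨y⟩ + ⟨x⟩⟦y⟧` and eliminating `⟨μ⟩ ⟦(D n) · τ⟧` between them yields
the formula.
-/

open Matrix

namespace Matrix

variable {R : Type*} [CommRing R]

def perp (v : Fin 2 → R) : Fin 2 → R := ![-v 1, v 0]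

def rot (G : Matrix (Fin 2) (Fin 2) R) : R := G 1 0 - G 0 1

theorem rot_sub (G H : Matrix (Fin 2) (Fin 2) R) : rot (G - H) = rot G - rot H := by
  simp only [rot, sub_apply]
  ring

theorem dotProduct_perp_self (v : Fin 2 → R) : v ⬝ᵥ perp v = 0 := by
  simp only [perp, dotProduct, Fin.sum_univ_two, cons_val_zero, cons_val_one]
  ring

theorem rot_vecMulVec (a n : Fin 2 → R) : rot (vecMulVec a n) = a ⬝ᵥ perp n := by
  simp only [rot, perp, vecMulVec_apply, dotProduct, Fin.sum_univ_two, cons_val_zero,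
    cons_val_one]
  ring

theorem vecMulVec_add_transpose_mulVec_dotProduct_perp (a : Fin 2 → R) {n : Fin 2 → R}
    (hn : n ⬝ᵥ n = 1) :
    ((vecMulVec a n + (vecMulVec a n)ᵀ) *ᵥ n) ⬝ᵥ perp n = rot (vecMulVec a n) := by
  rw [transpose_vecMulVec, add_mulVec, vecMulVec_mulVec, vecMulVec_mulVec, add_dotProduct,
    op_smul_eq_smul, op_smul_eq_smul, smul_dotProduct, smul_dotProduct, dotProduct_perp_self,
    rot_vecMulVec, smul_eq_mul, smul_eq_mul, mul_zero, add_zero, hn, one_mul]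

theorem smul_add_smul_one_mulVec_dotProduct_perp (μ c : R) (D : Matrix (Fin 2) (Fin 2) R)
    (n : Fin 2 → R) : ((μ • D + c • 1) *ᵥ n) ⬝ᵥ perp n = μ * ((D *ᵥ n) ⬝ᵥ perp n) := by
  rw [add_mulVec, smul_mulVec, smul_mulVec, one_mulVec, add_dotProduct, smul_dotProduct,
    smul_dotProduct, dotProduct_perp_self, smul_zero, add_zero, smul_eq_mul]

end Matrix

/-- Jump of the viscosity-weighted vorticity across the interface:
`⟦μ rot G⟧ = ⟦μ⟧ ( ⟨rot G⟩ − 2 (⟨D⟩ n) · τ )`, where `rot G = G₂₁ − G₁₂`. -/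
theorem vorticity_jump
    (n τ a : Fin 2 → ℝ) (hn : n ⬝ᵥ n = 1) (hτ : τ = ![-n 1, n 0])
    (Gp Gm : Matrix (Fin 2) (Fin 2) ℝ)
    (hjump : Gp - Gm = vecMulVec a n)
    (μp μm lamp lamm Pp Pm : ℝ)
    (Dp Dm Pip Pim : Matrix (Fin 2) (Fin 2) ℝ)
    (hDp : Dp = (2⁻¹ : ℝ) • (Gp + Gpᵀ))
    (hDm : Dm = (2⁻¹ : ℝ) • (Gm + Gmᵀ))
    (hPip : Pip = (2 * μp) • Dp + (lamp * Gp.trace - Pp) • (1 : Matrix (Fin 2) (Fin 2) ℝ))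
    (hPim : Pim = (2 * μm) • Dm + (lamm * Gm.trace - Pm) • (1 : Matrix (Fin 2) (Fin 2) ℝ))
    (hbal : (Pip - Pim).mulVec n = 0) :
    μp * (Gp 1 0 - Gp 0 1) - μm * (Gm 1 0 - Gm 0 1)
      = (μp - μm) *
        (((Gp 1 0 - Gp 0 1) + (Gm 1 0 - Gm 0 1)) / 2
          - 2 * ((((2⁻¹ : ℝ) • (Dp + Dm)).mulVec n) ⬝ᵥ τ)) := by
  change τ = perp n at hτ
  change μp * rot Gp - μm * rot Gm = (μp - μm) * ((rot Gp + rot Gm) / 2 - 2 * _)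
  subst hτ
  have htangential : μp * ((Dp *ᵥ n) ⬝ᵥ perp n) = μm * ((Dm *ᵥ n) ⬝ᵥ perp n) := by
    have := congrArg (· ⬝ᵥ perp n) hbal
    simp only [sub_mulVec, sub_dotProduct, zero_dotProduct, hPip, hPim,
      smul_add_smul_one_mulVec_dotProduct_perp] at this
    linear_combination this / 2
  have hkinematic : rot Gp - rot Gm = 2 * ((Dp *ᵥ n) ⬝ᵥ perp n) - 2 * ((Dm *ᵥ n) ⬝ᵥ perp n) := by
    rw [← rot_sub, hjump, ← vecMulVec_add_transpose_mulVec_dotProduct_perp a hn, ← hjump,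
      hDp, hDm]
    simp only [transpose_sub, smul_mulVec, smul_dotProduct, smul_eq_mul, sub_mulVec,
      add_mulVec, add_dotProduct, sub_dotProduct]
    ring
  rw [smul_mulVec, smul_dotProduct, add_mulVec, add_dotProduct, smul_eq_mul]
  linear_combination (μp + μm) / 2 * hkinematic + 2 * htangential
end

section
/- Let U ⊆ ℝ × ℝ² be open, let ρ : U → (0,∞) and u : U → ℝ² be continuously differentiable and satisfy the mass equation ∂ₜρ + div(ρ u) = 0 pointwise on U. Let P : (0,∞) → ℝ be continuous, fix ρ̃ > 0 and set P̃ := P(ρ̃). For a real number l ≥ 1 define the potential energy H_l(x) := x ∫_{ρ̃}^{x} s^{−2} |P(s) − P̃|^{l−1} (P(s) − P̃) ds for x > 0. Then at every point of U: ∂ₜ(H_l ∘ ρ) + div((H_l ∘ ρ) u) + |P(ρ) − P̃|^{l−1} (P(ρ) − P̃) · div u = 0. -/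
/-!
For any differentiable `H`, the chain rule gives
`∂ₜH(ρ) + div(H(ρ) u) = H'(ρ) (∂ₜρ + div(ρ u)) - (ρ H'(ρ) - H(ρ)) div u`,
so the mass equation renormalizes with coefficient `ρ H' - H`. For the potential energy
`H(x) = x ∫_{ρ̃}^x Q(s)/s² ds` with `Q(s) = |P(s) - P̃|^{l-1} (P(s) - P̃)`, the fundamental theorem of
calculus gives `x H'(x) = H(x) + Q(x)`, so this coefficient is exactly `Q(ρ)`.
-/

open MeasureTheory Set

theorem hasDerivAt_integral_of_continuousOn {G : ℝ → ℝ} {s : Set ℝ} {a x : ℝ}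
    (hs : IsOpen s) (hs' : s.OrdConnected) (hG : ContinuousOn G s) (ha : a ∈ s) (hx : x ∈ s) :
    HasDerivAt (fun y => ∫ t in a..y, G t) (G x) x :=
  intervalIntegral.integral_hasDerivAt_right (hG.mono (hs'.uIcc_subset ha hx)).intervalIntegrable
    (hG.stronglyMeasurableAtFilter hs x hx) (hG.continuousAt (hs.mem_nhds hx))

theorem hasDerivAt_mul_integral_div_sq {Q : ℝ → ℝ} {a x : ℝ} (hQ : ContinuousOn Q (Ioi 0))
    (ha : 0 < a) (hx : 0 < x) :
    HasDerivAt (fun y => y * ∫ s in a..y, Q s / s ^ 2)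
      ((x * (∫ s in a..x, Q s / s ^ 2) + Q x) / x) x := by
  have hG : ContinuousOn (fun s => Q s / s ^ 2) (Ioi 0) :=
    hQ.div (continuousOn_pow 2) fun s hs => pow_ne_zero 2 (ne_of_gt hs)
  refine ((hasDerivAt_id' x).fun_mul
    (hasDerivAt_integral_of_continuousOn isOpen_Ioi ordConnected_Ioi hG ha hx)).congr_deriv ?_
  field_simp

theorem renormalized_mass_equation {ρ u₁ u₂ : ℝ × ℝ × ℝ → ℝ} {p : ℝ × ℝ × ℝ}
    (hρ : DifferentiableAt ℝ ρ p) (hu₁ : DifferentiableAt ℝ u₁ p) (hu₂ : DifferentiableAt ℝ u₂ p)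
    {H : ℝ → ℝ} {H' : ℝ} (hH : HasDerivAt H H' (ρ p))
    (hmass : deriv (fun t => ρ (t, p.2.1, p.2.2)) p.1
        + (deriv (fun x => ρ (p.1, x, p.2.2) * u₁ (p.1, x, p.2.2)) p.2.1
          + deriv (fun y => ρ (p.1, p.2.1, y) * u₂ (p.1, p.2.1, y)) p.2.2) = 0) :
    deriv (fun t => H (ρ (t, p.2.1, p.2.2))) p.1
        + (deriv (fun x => H (ρ (p.1, x, p.2.2)) * u₁ (p.1, x, p.2.2)) p.2.1
          + deriv (fun y => H (ρ (p.1, p.2.1, y)) * u₂ (p.1, p.2.1, y)) p.2.2)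
        + (ρ p * H' - H (ρ p)) *
            (deriv (fun x => u₁ (p.1, x, p.2.2)) p.2.1
              + deriv (fun y => u₂ (p.1, p.2.1, y)) p.2.2) = 0 := by
  have hρt : DifferentiableAt ℝ (fun t => ρ (t, p.2.1, p.2.2)) p.1 := by fun_prop
  have hρx : DifferentiableAt ℝ (fun x => ρ (p.1, x, p.2.2)) p.2.1 := by fun_prop
  have hρy : DifferentiableAt ℝ (fun y => ρ (p.1, p.2.1, y)) p.2.2 := by fun_prop
  have hu₁x : DifferentiableAt ℝ (fun x => u₁ (p.1, x, p.2.2)) p.2.1 := by fun_prop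
  have hu₂y : DifferentiableAt ℝ (fun y => u₂ (p.1, p.2.1, y)) p.2.2 := by fun_prop
  rw [deriv_fun_mul hρx hu₁x, deriv_fun_mul hρy hu₂y] at hmass
  have hHt : HasDerivAt (fun t => H (ρ (t, p.2.1, p.2.2)))
      (H' * deriv (fun t => ρ (t, p.2.1, p.2.2)) p.1) p.1 := hH.comp p.1 hρt.hasDerivAt
  have hHx : HasDerivAt (fun x => H (ρ (p.1, x, p.2.2)))
      (H' * deriv (fun x => ρ (p.1, x, p.2.2)) p.2.1) p.2.1 := hH.comp p.2.1 hρx.hasDerivAt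
  have hHy : HasDerivAt (fun y => H (ρ (p.1, p.2.1, y)))
      (H' * deriv (fun y => ρ (p.1, p.2.1, y)) p.2.2) p.2.2 := hH.comp p.2.2 hρy.hasDerivAt
  rw [hHt.deriv, deriv_fun_mul hHx.differentiableAt hu₁x, hHx.deriv,
    deriv_fun_mul hHy.differentiableAt hu₂y, hHy.deriv]
  linear_combination H' * hmass

/-- Renormalization of the mass equation by the generalized potential energy
`H_l(x) = x ∫_{ρ̃}^{x} s⁻² |P(s)−P̃|^{l−1}(P(s)−P̃) ds`:
`∂ₜ(H_l∘ρ) + div((H_l∘ρ) u) + |P(ρ)−P̃|^{l−1}(P(ρ)−P̃) div u = 0` on `U`. -/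
theorem potential_energy_renormalized_mass_equation
    (U : Set (ℝ × ℝ × ℝ)) (hU : IsOpen U)
    (ρ u1 u2 : ℝ × ℝ × ℝ → ℝ)
    (hρpos : ∀ p ∈ U, 0 < ρ p)
    (hρ : ContDiffOn ℝ 1 ρ U) (hu1 : ContDiffOn ℝ 1 u1 U) (hu2 : ContDiffOn ℝ 1 u2 U)
    (P : ℝ → ℝ) (hP : ContinuousOn P (Set.Ioi 0))
    (ρtil : ℝ) (hρtil : 0 < ρtil)
    (l : ℝ) (hl : 1 ≤ l)
    (H : ℝ → ℝ)
    (hH : ∀ x, H x = x * ∫ s in ρtil..x, |P s - P ρtil| ^ (l - 1) * (P s - P ρtil) / s ^ 2)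
    (hmass : ∀ p ∈ U,
      deriv (fun t => ρ (t, p.2.1, p.2.2)) p.1
        + (deriv (fun x => ρ (p.1, x, p.2.2) * u1 (p.1, x, p.2.2)) p.2.1
          + deriv (fun y => ρ (p.1, p.2.1, y) * u2 (p.1, p.2.1, y)) p.2.2) = 0) :
    ∀ p ∈ U,
      deriv (fun t => H (ρ (t, p.2.1, p.2.2))) p.1
        + (deriv (fun x => H (ρ (p.1, x, p.2.2)) * u1 (p.1, x, p.2.2)) p.2.1
          + deriv (fun y => H (ρ (p.1, p.2.1, y)) * u2 (p.1, p.2.1, y)) p.2.2)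
        + |P (ρ p) - P ρtil| ^ (l - 1) * (P (ρ p) - P ρtil) *
            (deriv (fun x => u1 (p.1, x, p.2.2)) p.2.1
              + deriv (fun y => u2 (p.1, p.2.1, y)) p.2.2) = 0 := by
  intro p hp
  set Q : ℝ → ℝ := fun s => |P s - P ρtil| ^ (l - 1) * (P s - P ρtil)
  have hQ : ContinuousOn Q (Set.Ioi 0) :=
    ((hP.sub continuousOn_const).abs.rpow_const fun _ _ => Or.inr (by linarith)).mul
      (hP.sub continuousOn_const)
  have hρp := hρpos p hp
  have hH' : HasDerivAt H ((H (ρ p) + Q (ρ p)) / ρ p) (ρ p) := by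
    rw [funext hH]
    exact hasDerivAt_mul_integral_div_sq hQ hρtil hρp
  have hdiff {f : ℝ × ℝ × ℝ → ℝ} (hf : ContDiffOn ℝ 1 f U) : DifferentiableAt ℝ f p :=
    (hf.contDiffAt (hU.mem_nhds hp)).differentiableAt one_ne_zero
  have key := renormalized_mass_equation (hdiff hρ) (hdiff hu1) (hdiff hu2) hH' (hmass p hp)
  rwa [mul_div_cancel₀ _ hρp.ne', add_sub_cancel_left] at key
end

section
/- Let ν > 0 and 0 < r < 3. There exists a constant C, depending only on ν and r, such that for every t > 0, every measurable function h : [0,t] → [0,∞), and every τ ∈ [0,t]: ( ∫₀^{τ} e^{ν (s − τ)} h(s) ds )⁴ ≤ C ∫₀^{t} (min(1,s))^{r} h(s)⁴ ds. -/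
/-!
Split `e^{ν(s-τ)} h = (e^{ν(s-τ)} σ^{-r/4}) (σ^{r/4} h)` and apply Hölder with exponents `4/3`
and `4`. The second factor gives the weighted `L⁴` norm, and the first is bounded uniformly in `τ`
by `∫₀¹ s^{-r/3} ds + ∫_{-∞}^τ e^{4ν(s-τ)/3} ds = 1/(1 - r/3) + 3/(4ν)`, finite because `r < 3`.
-/

open MeasureTheory Set ENNReal

theorem lintegral_mul_pow_le_lintegral_rpow_mul {α : Type*} [MeasurableSpace α] {μ : Measure α}
    {f g : α → ℝ≥0∞} (hf : AEMeasurable f μ) (hg : AEMeasurable g μ) {n : ℕ} (hn : 1 < n) :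
    (∫⁻ a, f a * g a ∂μ) ^ n ≤
      (∫⁻ a, f a ^ ((n : ℝ) / (n - 1)) ∂μ) ^ (n - 1) * ∫⁻ a, g a ^ n ∂μ := by
  have hn' : (1 : ℝ) < n := by exact_mod_cast hn
  have hpq := (Real.HolderConjugate.conjExponent hn').symm
  have holder := ENNReal.lintegral_mul_le_Lp_mul_Lq μ hpq hf hg
  simp only [Real.conjExponent, Pi.mul_apply, ENNReal.rpow_natCast] at holder
  calc (∫⁻ a, f a * g a ∂μ) ^ n
      ≤ ((∫⁻ a, f a ^ ((n : ℝ) / (n - 1)) ∂μ) ^ (1 / ((n : ℝ) / (n - 1))) *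
          (∫⁻ a, g a ^ n ∂μ) ^ (1 / (n : ℝ))) ^ n := by gcongr
    _ = _ := by
      rw [mul_pow, ← ENNReal.rpow_mul_natCast, ← ENNReal.rpow_mul_natCast,
        one_div_mul_cancel (by positivity), ENNReal.rpow_one, ← ENNReal.rpow_natCast _ (n - 1)]
      congr 2
      field_simp
      push_cast [hn.le]
      ring

theorem setLIntegral_ofReal_mul_pow_le {α : Type*} [MeasurableSpace α] {μ : Measure α}
    {S : Set α} (hS : MeasurableSet S) {k g w : α → ℝ} (hk : Measurable k) (hg : Measurable g)
    (hw : Measurable w) (hk0 : ∀ x ∈ S, 0 ≤ k x) (hg0 : ∀ x ∈ S, 0 ≤ g x)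
    (hw0 : ∀ x ∈ S, 0 < w x) {n : ℕ} (hn : 1 < n) :
    (∫⁻ x in S, ENNReal.ofReal (k x * g x) ∂μ) ^ n ≤
      (∫⁻ x in S, ENNReal.ofReal ((k x ^ n / w x) ^ (1 / (n - 1 : ℝ))) ∂μ) ^ (n - 1) *
        ∫⁻ x in S, ENNReal.ofReal (w x * g x ^ n) ∂μ := by
  have hn0 : (n : ℝ) ≠ 0 := by positivity
  have hn1 : (0 : ℝ) < n - 1 := by
    have : (1 : ℝ) < n := by exact_mod_cast hn
    linarith
  set f : α → ℝ≥0∞ := fun x => ENNReal.ofReal (k x * w x ^ (-(1 / n : ℝ)))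
  set G : α → ℝ≥0∞ := fun x => ENNReal.ofReal (w x ^ (1 / n : ℝ) * g x)
  have hsplit : ∀ x ∈ S, ENNReal.ofReal (k x * g x) = f x * G x := by
    intro x hx
    have hcancel : w x ^ (-(1 / n : ℝ)) * w x ^ (1 / n : ℝ) = 1 := by
      rw [← Real.rpow_add (hw0 x hx), neg_add_cancel, Real.rpow_zero]
    rw [← ENNReal.ofReal_mul (mul_nonneg (hk0 x hx) (Real.rpow_nonneg (hw0 x hx).le _))]
    congr 1
    linear_combination -(k x * g x) * hcancel
  have hf_pow : ∀ x ∈ S, f x ^ ((n : ℝ) / (n - 1)) =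
      ENNReal.ofReal ((k x ^ n / w x) ^ (1 / (n - 1 : ℝ))) := by
    intro x hx
    have hwx := hw0 x hx
    rw [ENNReal.ofReal_rpow_of_nonneg (mul_nonneg (hk0 x hx) (by positivity)) (by positivity),
      Real.div_rpow (pow_nonneg (hk0 x hx) n) hwx.le, Real.mul_rpow (hk0 x hx) (by positivity),
      ← Real.rpow_natCast, ← Real.rpow_mul (hk0 x hx), ← Real.rpow_mul hwx.le, neg_mul,
      Real.rpow_neg hwx.le, ← div_eq_mul_inv]
    congr 3 <;> field_simp
  have hG_pow : ∀ x ∈ S, G x ^ n = ENNReal.ofReal (w x * g x ^ n) := by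
    intro x hx
    rw [← ENNReal.ofReal_pow (mul_nonneg (by have := hw0 x hx; positivity) (hg0 x hx)), mul_pow,
      ← Real.rpow_mul_natCast (hw0 x hx).le, one_div_mul_cancel hn0, Real.rpow_one]
  calc (∫⁻ x in S, ENNReal.ofReal (k x * g x) ∂μ) ^ n
      = (∫⁻ x in S, f x * G x ∂μ) ^ n := by rw [setLIntegral_congr_fun hS hsplit]
    _ ≤ (∫⁻ x in S, f x ^ ((n : ℝ) / (n - 1)) ∂μ) ^ (n - 1) * ∫⁻ x in S, G x ^ n ∂μ :=
      lintegral_mul_pow_le_lintegral_rpow_mul (by fun_prop) (by fun_prop) hn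
    _ = _ := by rw [setLIntegral_congr_fun hS hf_pow, setLIntegral_congr_fun hS hG_pow]

theorem setLIntegral_Ioc_zero_one_rpow {a : ℝ} (ha : a < 1) :
    ∫⁻ s in Ioc (0 : ℝ) 1, ENNReal.ofReal (s ^ (-a)) = ENNReal.ofReal (1 / (1 - a)) := by
  have ha' : (-1 : ℝ) < -a := by linarith
  have hint : IntegrableOn (fun s : ℝ => s ^ (-a)) (Ioc 0 1) := by
    simpa [intervalIntegrable_iff, uIoc_of_le zero_le_one] using
      intervalIntegral.intervalIntegrable_rpow' (a := 0) (b := 1) ha'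
  rw [← ofReal_integral_eq_lintegral_ofReal hint
    (ae_restrict_of_forall_mem measurableSet_Ioc fun s hs => Real.rpow_nonneg hs.1.le _),
    ← intervalIntegral.integral_of_le zero_le_one, integral_rpow (Or.inl ha'),
    Real.one_rpow, Real.zero_rpow (by linarith)]
  congr 1
  ring

theorem setLIntegral_Iic_exp_mul_sub {c : ℝ} (hc : 0 < c) (τ : ℝ) :
    ∫⁻ s in Iic τ, ENNReal.ofReal (Real.exp (c * (s - τ))) = ENNReal.ofReal (1 / c) := by
  have hsplit : ∀ s, Real.exp (c * (s - τ)) = Real.exp (-(c * τ)) * Real.exp (c * s) := by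
    intro s; rw [← Real.exp_add]; ring_nf
  simp_rw [hsplit]
  rw [← ofReal_integral_eq_lintegral_ofReal ((integrableOn_exp_mul_Iic hc τ).const_mul _)
    (Filter.Eventually.of_forall fun s => by positivity), integral_const_mul,
    integral_exp_mul_Iic hc, mul_div_assoc', ← Real.exp_add, neg_add_cancel, Real.exp_zero]

theorem exp_mul_min_rpow_le_indicator_add {c a τ s : ℝ} (hc : 0 < c) (hs : s ∈ Ioc 0 τ) :
    ENNReal.ofReal (Real.exp (c * (s - τ)) * min 1 s ^ (-a)) ≤
      (Ioc 0 1).indicator (fun u => ENNReal.ofReal (u ^ (-a))) s +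
        ENNReal.ofReal (Real.exp (c * (s - τ))) := by
  rcases le_or_gt s 1 with hs1 | hs1
  · have hexp : Real.exp (c * (s - τ)) ≤ 1 :=
      Real.exp_le_one_iff.2 (mul_nonpos_of_nonneg_of_nonpos hc.le (by linarith [hs.2]))
    rw [indicator_of_mem (show s ∈ Ioc (0 : ℝ) 1 from ⟨hs.1, hs1⟩), min_eq_right hs1]
    exact le_add_right (ENNReal.ofReal_le_ofReal
      (mul_le_of_le_one_left (Real.rpow_nonneg hs.1.le _) hexp))
  · rw [indicator_of_notMem fun h => hs1.not_ge h.2, min_eq_left hs1.le, Real.one_rpow,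
      mul_one, zero_add]

theorem setLIntegral_Ioc_exp_mul_min_rpow_le {c a : ℝ} (hc : 0 < c) (ha : a < 1) (τ : ℝ) :
    ∫⁻ s in Ioc 0 τ, ENNReal.ofReal (Real.exp (c * (s - τ)) * min 1 s ^ (-a)) ≤
      ENNReal.ofReal (1 / (1 - a)) + ENNReal.ofReal (1 / c) := by
  have hind : Measurable ((Ioc (0 : ℝ) 1).indicator fun u => ENNReal.ofReal (u ^ (-a))) :=
    (by fun_prop : Measurable fun u : ℝ => ENNReal.ofReal (u ^ (-a))).indicator measurableSet_Ioc
  calc ∫⁻ s in Ioc 0 τ, ENNReal.ofReal (Real.exp (c * (s - τ)) * min 1 s ^ (-a))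
      ≤ ∫⁻ s in Ioc 0 τ, ((Ioc 0 1).indicator (fun u => ENNReal.ofReal (u ^ (-a))) s +
          ENNReal.ofReal (Real.exp (c * (s - τ)))) :=
        setLIntegral_mono (by fun_prop) fun s hs => exp_mul_min_rpow_le_indicator_add hc hs
    _ = (∫⁻ s in Ioc 0 τ, (Ioc 0 1).indicator (fun u => ENNReal.ofReal (u ^ (-a))) s) +
          ∫⁻ s in Ioc 0 τ, ENNReal.ofReal (Real.exp (c * (s - τ))) :=
        lintegral_add_left hind _
    _ ≤ (∫⁻ s, (Ioc 0 1).indicator (fun u => ENNReal.ofReal (u ^ (-a))) s) +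
          ∫⁻ s in Iic τ, ENNReal.ofReal (Real.exp (c * (s - τ))) :=
        add_le_add (setLIntegral_le_lintegral _ _) (lintegral_mono_set Ioc_subset_Iic_self)
    _ = _ := by
      rw [lintegral_indicator measurableSet_Ioc, setLIntegral_Ioc_zero_one_rpow ha,
        setLIntegral_Iic_exp_mul_sub hc]

theorem duhamel_sup_bound_by_weighted_L4_general
    (ν r : ℝ) (hν : 0 < ν) (hr3 : r < 3) :
    ∃ C : ℝ≥0∞, C ≠ ⊤ ∧
      ∀ t : ℝ, 0 < t → ∀ h : ℝ → ℝ, Measurable h →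
        (∀ s ∈ Icc (0 : ℝ) t, 0 ≤ h s) →
        ∀ τ ∈ Icc (0 : ℝ) t,
          (∫⁻ s in Ioc (0 : ℝ) τ, ENNReal.ofReal (Real.exp (ν * (s - τ)) * h s)) ^ 4
            ≤ C * ∫⁻ s in Ioc (0 : ℝ) t, ENNReal.ofReal ((min 1 s) ^ r * h s ^ 4) := by
  refine ⟨(ENNReal.ofReal (1 / (1 - r / 3)) + ENNReal.ofReal (1 / (4 / 3 * ν))) ^ 3,
    by finiteness, fun t _ h hh hnn τ hτ => ?_⟩
  have hkernel : ∀ s ∈ Ioc 0 τ,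
      ENNReal.ofReal ((Real.exp (ν * (s - τ)) ^ 4 / min 1 s ^ r) ^ (1 / ((4 : ℕ) - 1 : ℝ))) =
        ENNReal.ofReal (Real.exp (4 / 3 * ν * (s - τ)) * min 1 s ^ (-(r / 3))) := by
    intro s hs
    have hσ : 0 < min 1 s := lt_min one_pos hs.1
    rw [← Real.exp_nat_mul, Real.div_rpow (by positivity) (by positivity), ← Real.exp_mul,
      ← Real.rpow_mul hσ.le, div_eq_mul_inv, ← Real.rpow_neg hσ.le]
    congr 3 <;> norm_num <;> ring
  calc (∫⁻ s in Ioc 0 τ, ENNReal.ofReal (Real.exp (ν * (s - τ)) * h s)) ^ 4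
      ≤ (∫⁻ s in Ioc 0 τ, ENNReal.ofReal
            ((Real.exp (ν * (s - τ)) ^ 4 / min 1 s ^ r) ^ (1 / ((4 : ℕ) - 1 : ℝ)))) ^ 3 *
          ∫⁻ s in Ioc 0 τ, ENNReal.ofReal (min 1 s ^ r * h s ^ 4) :=
        setLIntegral_ofReal_mul_pow_le measurableSet_Ioc (by fun_prop) hh (by fun_prop)
          (fun s _ => (Real.exp_pos _).le) (fun s hs => hnn s ⟨hs.1.le, hs.2.trans hτ.2⟩)
          (fun s hs => Real.rpow_pos_of_pos (lt_min one_pos hs.1) r) (by norm_num)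
    _ ≤ _ := by
      rw [setLIntegral_congr_fun measurableSet_Ioc hkernel]
      gcongr
      · exact setLIntegral_Ioc_exp_mul_min_rpow_le (by positivity) (by linarith) τ
      · exact hτ.2

/-- Uniform-in-time bound on a damped Duhamel integral by a time-weighted `L⁴` norm:
`(∫₀^τ e^{ν(s−τ)} h(s) ds)⁴ ≤ C ∫₀ᵗ σ(s)^r h(s)⁴ ds` with `σ(s) = min(1,s)`, `0 < r < 3`. -/
theorem duhamel_sup_bound_by_weighted_L4
    (ν r : ℝ) (hν : 0 < ν) (hr0 : 0 < r) (hr3 : r < 3) :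
    ∃ C : ℝ≥0∞, C ≠ ⊤ ∧
      ∀ t : ℝ, 0 < t → ∀ h : ℝ → ℝ, Measurable h →
        (∀ s ∈ Icc (0 : ℝ) t, 0 ≤ h s) →
        ∀ τ ∈ Icc (0 : ℝ) t,
          (∫⁻ s in Ioc (0 : ℝ) τ, ENNReal.ofReal (Real.exp (ν * (s - τ)) * h s)) ^ 4
            ≤ C * ∫⁻ s in Ioc (0 : ℝ) t, ENNReal.ofReal ((min 1 s) ^ r * h s ^ 4) :=
  duhamel_sup_bound_by_weighted_L4_general ν r hν hr3
end

section
/- Let ν > 0 and 0 < r < 3. There exists a constant C, depending only on ν and r, such that for every t > 0 and every measurable function h : [0,t] → [0,∞): ∫₀^{t} ( ∫₀^{τ} e^{ν (s − τ)} h(s) ds )⁴ dτ ≤ C ∫₀^{t} (min(1,s))^{r} h(s)⁴ ds. -/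
open MeasureTheory Set ENNReal

/-!
Write `σ(s) = min 1 s`. For fixed `τ`, Hölder's inequality with exponents `4/3` and `4` for the
measure `e^{ν(s-τ)} ds` on `(0, τ]`, applied to `h = σ^{-r/4} · σ^{r/4} h`, gives
`(∫₀^τ e^{ν(s-τ)} h)⁴ ≤ (∫₀^τ e^{ν(s-τ)} σ^{-r/3})³ · ∫₀^τ e^{ν(s-τ)} σ^r h⁴`.
Since `r/3 < 1`, the first factor is bounded uniformly in `τ` by `(1 - r/3)⁻¹ + ν⁻¹`
(integrability of `s^{-r/3}` near `0`, exponential decay away from it). Integrating in `τ` and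
exchanging the order of integration, the remaining double integral is at most
`ν⁻¹ ∫₀ᵗ σ^r h⁴`, because `∫_s^t e^{ν(s-τ)} dτ ≤ ν⁻¹`.
-/

lemma lintegral_pow_four_le_of_weight {α : Type*} [MeasurableSpace α] {μ : Measure α}
    {w H : α → ℝ≥0∞} (r : ℝ) (hw : AEMeasurable w μ) (hH : AEMeasurable H μ)
    (hw0 : ∀ᵐ x ∂μ, w x ≠ 0) (hwtop : ∀ᵐ x ∂μ, w x ≠ ⊤) :
    (∫⁻ x, H x ∂μ) ^ 4 ≤ (∫⁻ x, w x ^ (-(r / 3)) ∂μ) ^ 3 * ∫⁻ x, w x ^ r * H x ^ 4 ∂μ := by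
  have hsplit : ∫⁻ x, H x ∂μ = ∫⁻ x, w x ^ (-(r / 4)) * (w x ^ (r / 4) * H x) ∂μ := by
    refine lintegral_congr_ae ?_
    filter_upwards [hw0, hwtop] with x h0 htop
    rw [← mul_assoc, ← ENNReal.rpow_add _ _ h0 htop, neg_add_cancel, ENNReal.rpow_zero, one_mul]
  have hholder := ENNReal.lintegral_mul_le_Lp_mul_Lq μ
    (Real.holderConjugate_iff.2 ⟨by norm_num, by norm_num⟩ : (4 / 3 : ℝ).HolderConjugate 4)
    (hw.pow_const (-(r / 4))) ((hw.pow_const (r / 4)).mul hH)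
  have hf (x : α) : (w x ^ (-(r / 4))) ^ (4 / 3 : ℝ) = w x ^ (-(r / 3)) := by
    rw [← ENNReal.rpow_mul]; ring_nf
  have hg (x : α) : (w x ^ (r / 4) * H x) ^ (4 : ℝ) = w x ^ r * H x ^ 4 := by
    rw [ENNReal.mul_rpow_of_nonneg _ _ (by norm_num), ← ENNReal.rpow_mul, ENNReal.rpow_ofNat]
    ring_nf
  simp only [Pi.mul_apply, hf, hg, show (1 : ℝ) / (4 / 3) = 3 / 4 by norm_num] at hholder
  calc (∫⁻ x, H x ∂μ) ^ 4
      ≤ ((∫⁻ x, w x ^ (-(r / 3)) ∂μ) ^ (3 / 4 : ℝ) * (∫⁻ x, w x ^ r * H x ^ 4 ∂μ) ^ (1 / 4 : ℝ))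
          ^ 4 := by
        rw [hsplit]
        gcongr
    _ = _ := by
        rw [mul_pow, ← ENNReal.rpow_natCast, ← ENNReal.rpow_natCast (_ ^ (1 / 4 : ℝ)),
          ← ENNReal.rpow_mul, ← ENNReal.rpow_mul]
        norm_num

lemma lintegral_Iic_exp_mul_sub {ν : ℝ} (hν : 0 < ν) (c : ℝ) :
    ∫⁻ x in Iic c, ENNReal.ofReal (Real.exp (ν * (x - c))) = ENNReal.ofReal ν⁻¹ := by
  have hsplit (x : ℝ) : Real.exp (ν * (x - c)) = Real.exp (-(ν * c)) * Real.exp (ν * x) := by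
    rw [← Real.exp_add]; ring_nf
  simp_rw [hsplit]
  rw [← ofReal_integral_eq_lintegral_ofReal ((integrableOn_exp_mul_Iic hν c).const_mul _)
      (ae_of_all _ fun x => by positivity), integral_const_mul, integral_exp_mul_Iic hν,
    mul_div_assoc', ← Real.exp_add, neg_add_cancel, Real.exp_zero, one_div]

lemma lintegral_Ioi_exp_mul_sub {ν : ℝ} (hν : 0 < ν) (c : ℝ) :
    ∫⁻ x in Ioi c, ENNReal.ofReal (Real.exp (ν * (c - x))) = ENNReal.ofReal ν⁻¹ := by
  have hsplit (x : ℝ) : Real.exp (ν * (c - x)) = Real.exp (ν * c) * Real.exp (-ν * x) := by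
    rw [← Real.exp_add]; ring_nf
  simp_rw [hsplit]
  rw [← ofReal_integral_eq_lintegral_ofReal
      ((integrableOn_exp_mul_Ioi (neg_lt_zero.2 hν) c).const_mul _)
      (ae_of_all _ fun x => by positivity), integral_const_mul,
    integral_exp_mul_Ioi (neg_lt_zero.2 hν), neg_div_neg_eq, mul_div_assoc', ← Real.exp_add]
  ring_nf
  simp

lemma lintegral_Ioc_rpow_neg {a : ℝ} (ha : a < 1) :
    ∫⁻ s in Ioc (0 : ℝ) 1, ENNReal.ofReal (s ^ (-a)) = ENNReal.ofReal (1 - a)⁻¹ := by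
  have hexp : (-1 : ℝ) < -a := by linarith
  have hint : IntegrableOn (fun x : ℝ => x ^ (-a)) (Ioc 0 1) :=
    (intervalIntegrable_iff_integrableOn_Ioc_of_le zero_le_one).mp
      (intervalIntegral.intervalIntegrable_rpow' hexp)
  rw [← ofReal_integral_eq_lintegral_ofReal hint
      ((ae_restrict_mem measurableSet_Ioc).mono fun x hx => Real.rpow_nonneg hx.1.le _),
    ← intervalIntegral.integral_of_le zero_le_one, integral_rpow (Or.inl hexp),
    Real.one_rpow, Real.zero_rpow (by linarith)]
  congr 1
  ring_nf

lemma lintegral_Ioc_exp_mul_sub_mul_min_one_rpow_neg_le {ν a : ℝ} (hν : 0 < ν) (ha : a < 1)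
    (b : ℝ) :
    ∫⁻ s in Ioc 0 b, ENNReal.ofReal (Real.exp (ν * (s - b))) * ENNReal.ofReal (min 1 s) ^ (-a)
      ≤ ENNReal.ofReal (1 - a)⁻¹ + ENNReal.ofReal ν⁻¹ := by
  have hpointwise : ∀ s ∈ Ioc 0 b,
      ENNReal.ofReal (Real.exp (ν * (s - b))) * ENNReal.ofReal (min 1 s) ^ (-a)
        ≤ (Ioc 0 1).indicator (fun s => ENNReal.ofReal (s ^ (-a))) s
          + ENNReal.ofReal (Real.exp (ν * (s - b))) := by
    intro s ⟨hs0, hsb⟩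
    rcases le_or_gt s 1 with hs1 | hs1
    · have hexp : ENNReal.ofReal (Real.exp (ν * (s - b))) ≤ 1 :=
        ENNReal.ofReal_le_one.2 <| Real.exp_le_one_iff.2 <|
          mul_nonpos_of_nonneg_of_nonpos hν.le (by linarith)
      rw [indicator_of_mem (show s ∈ Ioc (0 : ℝ) 1 from ⟨hs0, hs1⟩), min_eq_right hs1,
        ENNReal.ofReal_rpow_of_pos hs0]
      exact (mul_le_of_le_one_left' hexp).trans le_self_add
    · rw [min_eq_left hs1.le, ENNReal.ofReal_one, ENNReal.one_rpow, mul_one]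
      exact le_add_self
  calc _ ≤ ∫⁻ s in Ioc 0 b, ((Ioc 0 1).indicator (fun s => ENNReal.ofReal (s ^ (-a))) s
          + ENNReal.ofReal (Real.exp (ν * (s - b)))) :=
        setLIntegral_mono' measurableSet_Ioc hpointwise
    _ = (∫⁻ s in Ioc 0 b, (Ioc 0 1).indicator (fun s => ENNReal.ofReal (s ^ (-a))) s)
          + ∫⁻ s in Ioc 0 b, ENNReal.ofReal (Real.exp (ν * (s - b))) :=
        lintegral_add_left ((by fun_prop : Measurable _).indicator measurableSet_Ioc) _
    _ ≤ (∫⁻ s, (Ioc 0 1).indicator (fun s => ENNReal.ofReal (s ^ (-a))) s)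
          + ∫⁻ s in Iic b, ENNReal.ofReal (Real.exp (ν * (s - b))) :=
        add_le_add (setLIntegral_le_lintegral _ _) (lintegral_mono_set Ioc_subset_Iic_self)
    _ = _ := by
      rw [lintegral_indicator measurableSet_Ioc, lintegral_Ioc_rpow_neg ha,
        lintegral_Iic_exp_mul_sub hν]

lemma lintegral_Ioc_exp_mul_pow_four_le {ν r : ℝ} (hν : 0 < ν) (hr3 : r < 3) (τ : ℝ)
    {H : ℝ → ℝ≥0∞} (hH : Measurable H) :
    (∫⁻ s in Ioc 0 τ, ENNReal.ofReal (Real.exp (ν * (s - τ))) * H s) ^ 4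
      ≤ (ENNReal.ofReal (1 - r / 3)⁻¹ + ENNReal.ofReal ν⁻¹) ^ 3 *
        ∫⁻ s in Ioc 0 τ,
          ENNReal.ofReal (Real.exp (ν * (s - τ))) * (ENNReal.ofReal (min 1 s) ^ r * H s ^ 4) := by
  have hE : Measurable fun s => ENNReal.ofReal (Real.exp (ν * (s - τ))) := by fun_prop
  set μ := (volume.restrict (Ioc 0 τ)).withDensity
    fun s => ENNReal.ofReal (Real.exp (ν * (s - τ)))
  have hσ0 : ∀ᵐ s ∂μ, ENNReal.ofReal (min 1 s) ≠ 0 :=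
    withDensity_absolutelyContinuous _ _ <| (ae_restrict_mem measurableSet_Ioc).mono
      fun s hs => by simpa using hs.1
  have hholder := lintegral_pow_four_le_of_weight (μ := μ) r (by fun_prop) hH.aemeasurable hσ0
    (ae_of_all _ fun _ => ofReal_ne_top)
  rw [lintegral_withDensity_eq_lintegral_mul _ hE hH,
    lintegral_withDensity_eq_lintegral_mul _ hE (by fun_prop),
    lintegral_withDensity_eq_lintegral_mul _ hE (by fun_prop)] at hholder
  simp only [Pi.mul_apply] at hholder
  refine hholder.trans ?_
  gcongr
  exact lintegral_Ioc_exp_mul_sub_mul_min_one_rpow_neg_le hν (by linarith) τ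

lemma lintegral_Ioc_lintegral_Ioc_swap {F : ℝ → ℝ → ℝ≥0∞} (hF : Measurable (Function.uncurry F))
    (a t : ℝ) :
    ∫⁻ τ in Ioc a t, ∫⁻ s in Ioc a τ, F τ s = ∫⁻ s in Ioc a t, ∫⁻ τ in Icc s t, F τ s := by
  set T : Set (ℝ × ℝ) := {p | a < p.2 ∧ p.2 ≤ p.1 ∧ p.1 ≤ t}
  have hT : MeasurableSet T :=
    (measurableSet_lt measurable_const measurable_snd).inter
      ((measurableSet_le measurable_snd measurable_fst).inter
        (measurableSet_le measurable_fst measurable_const))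
  have hslice_fst (τ : ℝ) : (Ioc a t).indicator (fun τ => ∫⁻ s in Ioc a τ, F τ s) τ
      = ∫⁻ s, T.indicator (Function.uncurry F) (τ, s) := by
    by_cases hτ : τ ∈ Ioc a t
    · rw [indicator_of_mem hτ, ← lintegral_indicator measurableSet_Ioc]
      congr 1 with s
      simp only [indicator_apply, T, mem_ofPred_eq, mem_Ioc, Function.uncurry_apply_pair]
      grind
    · rw [indicator_of_notMem hτ, eq_comm]
      refine (lintegral_congr fun s => indicator_of_notMem ?_ _).trans lintegral_zero
      exact fun ⟨has, hsτ, hτt⟩ => hτ ⟨has.trans_le hsτ, hτt⟩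
  have hslice_snd (s : ℝ) : (Ioc a t).indicator (fun s => ∫⁻ τ in Icc s t, F τ s) s
      = ∫⁻ τ, T.indicator (Function.uncurry F) (τ, s) := by
    by_cases hs : s ∈ Ioc a t
    · rw [indicator_of_mem hs, ← lintegral_indicator measurableSet_Icc]
      congr 1 with τ
      simp only [indicator_apply, T, mem_ofPred_eq, mem_Icc, Function.uncurry_apply_pair]
      grind
    · rw [indicator_of_notMem hs, eq_comm]
      refine (lintegral_congr fun τ => indicator_of_notMem ?_ _).trans lintegral_zero
      exact fun ⟨has, hsτ, hτt⟩ => hs ⟨has, hsτ.trans hτt⟩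
  calc _ = ∫⁻ τ, ∫⁻ s, T.indicator (Function.uncurry F) (τ, s) := by
        rw [← lintegral_indicator measurableSet_Ioc]
        exact lintegral_congr hslice_fst
    _ = ∫⁻ s, ∫⁻ τ, T.indicator (Function.uncurry F) (τ, s) :=
        lintegral_lintegral_swap (hF.indicator hT).aemeasurable
    _ = _ := by
        rw [← lintegral_indicator measurableSet_Ioc]
        exact (lintegral_congr hslice_snd).symm

lemma lintegral_Ioc_lintegral_Ioc_exp_mul_le {ν : ℝ} (hν : 0 < ν) {K : ℝ → ℝ≥0∞}
    (hK : Measurable K) (a t : ℝ) :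
    ∫⁻ τ in Ioc a t, ∫⁻ s in Ioc a τ, ENNReal.ofReal (Real.exp (ν * (s - τ))) * K s
      ≤ ENNReal.ofReal ν⁻¹ * ∫⁻ s in Ioc a t, K s := by
  rw [lintegral_Ioc_lintegral_Ioc_swap (by fun_prop), ← lintegral_const_mul' _ _ ofReal_ne_top]
  refine lintegral_mono fun s => ?_
  rw [lintegral_mul_const _ (by fun_prop)]
  gcongr
  calc ∫⁻ τ in Icc s t, ENNReal.ofReal (Real.exp (ν * (s - τ)))
      ≤ ∫⁻ τ in Ici s, ENNReal.ofReal (Real.exp (ν * (s - τ))) :=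
        lintegral_mono_set Icc_subset_Ici_self
    _ = ENNReal.ofReal ν⁻¹ := by
      rw [← setLIntegral_congr Ioi_ae_eq_Ici, lintegral_Ioi_exp_mul_sub hν]

theorem duhamel_L4_bound_by_weighted_L4_general
    (ν r : ℝ) (hν : 0 < ν) (hr3 : r < 3) :
    ∃ C : ℝ≥0∞, C ≠ ⊤ ∧
      ∀ t : ℝ, 0 < t → ∀ h : ℝ → ℝ, Measurable h →
        (∀ s ∈ Icc (0 : ℝ) t, 0 ≤ h s) →
        (∫⁻ τ in Ioc (0 : ℝ) t,
            (∫⁻ s in Ioc (0 : ℝ) τ, ENNReal.ofReal (Real.exp (ν * (s - τ)) * h s)) ^ 4)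
          ≤ C * ∫⁻ s in Ioc (0 : ℝ) t, ENNReal.ofReal ((min 1 s) ^ r * h s ^ 4) := by
  set A : ℝ≥0∞ := ENNReal.ofReal (1 - r / 3)⁻¹ + ENNReal.ofReal ν⁻¹
  refine ⟨A ^ 3 * ENNReal.ofReal ν⁻¹, by finiteness, fun t _ h hmeas hnonneg => ?_⟩
  have hexp_mul (τ : ℝ) : ∫⁻ s in Ioc 0 τ, ENNReal.ofReal (Real.exp (ν * (s - τ)) * h s)
      = ∫⁻ s in Ioc 0 τ, ENNReal.ofReal (Real.exp (ν * (s - τ))) * ENNReal.ofReal (h s) :=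
    lintegral_congr fun s => ENNReal.ofReal_mul (Real.exp_pos _).le
  have hweight : ∫⁻ s in Ioc 0 t, ENNReal.ofReal ((min 1 s) ^ r * h s ^ 4)
      = ∫⁻ s in Ioc 0 t, ENNReal.ofReal (min 1 s) ^ r * ENNReal.ofReal (h s) ^ 4 :=
    setLIntegral_congr_fun measurableSet_Ioc fun s hs => by
      rw [ENNReal.ofReal_mul (Real.rpow_nonneg (lt_min one_pos hs.1).le _),
        ENNReal.ofReal_rpow_of_pos (lt_min one_pos hs.1),
        ENNReal.ofReal_pow (hnonneg s ⟨hs.1.le, hs.2⟩)]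
  simp only [hexp_mul, hweight]
  calc _ ≤ ∫⁻ τ in Ioc 0 t, A ^ 3 * ∫⁻ s in Ioc 0 τ, ENNReal.ofReal (Real.exp (ν * (s - τ))) *
            (ENNReal.ofReal (min 1 s) ^ r * ENNReal.ofReal (h s) ^ 4) :=
        lintegral_mono fun τ => lintegral_Ioc_exp_mul_pow_four_le hν hr3 τ (by fun_prop)
    _ ≤ A ^ 3 * (ENNReal.ofReal ν⁻¹ *
          ∫⁻ s in Ioc 0 t, ENNReal.ofReal (min 1 s) ^ r * ENNReal.ofReal (h s) ^ 4) := by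
        rw [lintegral_const_mul' _ _ (by finiteness)]
        gcongr
        exact lintegral_Ioc_lintegral_Ioc_exp_mul_le hν (by fun_prop) 0 t
    _ = _ := (mul_assoc _ _ _).symm

/-- `L⁴`-in-time bound on the damped Duhamel integral by a time-weighted `L⁴` norm:
`∫₀ᵗ (∫₀^τ e^{ν(s−τ)} h(s) ds)⁴ dτ ≤ C ∫₀ᵗ σ(s)^r h(s)⁴ ds`, `σ(s) = min(1,s)`, `0 < r < 3`. -/
theorem duhamel_L4_bound_by_weighted_L4
    (ν r : ℝ) (hν : 0 < ν) (hr0 : 0 < r) (hr3 : r < 3) :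
    ∃ C : ℝ≥0∞, C ≠ ⊤ ∧
      ∀ t : ℝ, 0 < t → ∀ h : ℝ → ℝ, Measurable h →
        (∀ s ∈ Icc (0 : ℝ) t, 0 ≤ h s) →
        (∫⁻ τ in Ioc (0 : ℝ) t,
            (∫⁻ s in Ioc (0 : ℝ) τ, ENNReal.ofReal (Real.exp (ν * (s - τ)) * h s)) ^ 4)
          ≤ C * ∫⁻ s in Ioc (0 : ℝ) t, ENNReal.ofReal ((min 1 s) ^ r * h s ^ 4) :=
  duhamel_L4_bound_by_weighted_L4_general ν r hν hr3
end
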